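/- arXiv:2206.11534 — 3 statements merged into one kernel-verified Lean document; each statement's English description precedes it below -/
import Mathlib

section
/- Let Y : [0,∞) → ℝ be continuous and b : [0,∞) → ℝ continuous and strictly increasing with continuous inverse b⁻¹, and fix x ≥ b⁻¹(Y(0)). Define D(t) = sup_{0≤s≤t} max(b⁻¹(Y(s)) − x, 0) and X(t) = x + D(t). Then D is nondecreasing and continuous on (0,∞), X(t) ≥ b⁻¹(Y(t)) for all t ≥ 0, and D is flat off the set {t : X(t) = b⁻¹(Y(t))}: for every s ≥ 0 with X(s) > b⁻¹(Y(s)) there exists ε > 0 such that D is constant on [s, s+ε]. -/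
open Set

/-- Pathwise Skorokhod reflection (Lemma 2.1): with `D(t) = sup_{0≤s≤t} (b⁻¹(Y(s)) − x)⁺`
and `X = x + D`, the process `D` is nondecreasing and continuous on `(0,∞)`,
`X(t) ≥ b⁻¹(Y(t))` for all `t ≥ 0`, and `D` is flat off `{X = b⁻¹(Y)}`. -/
theorem skorokhod_reflection_path (Y b binv : ℝ → ℝ) (x : ℝ)
    (hY : Continuous Y)
    (hb : Continuous b) (hbmono : StrictMono b)
    (hbinv : Continuous binv)
    (hinv₁ : Function.LeftInverse binv b) (hinv₂ : Function.RightInverse binv b)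
    (hx : binv (Y 0) ≤ x)
    (D : ℝ → ℝ)
    (hD : ∀ t : ℝ, D t = sSup ((fun s => max (binv (Y s) - x) 0) '' Icc 0 t)) :
    MonotoneOn D (Ici (0 : ℝ))
      ∧ ContinuousOn D (Ioi (0 : ℝ))
      ∧ (∀ t : ℝ, 0 ≤ t → binv (Y t) ≤ x + D t)
      ∧ (∀ s : ℝ, 0 ≤ s → binv (Y s) < x + D s →
          ∃ ε > 0, ∀ t ∈ Icc s (s + ε), D t = D s) := by
  set f : ℝ → ℝ := fun s => max (binv (Y s) - x) 0 with hf_def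
  have hf : Continuous f := ((hbinv.comp hY).sub continuous_const).max continuous_const
  have hbdd : ∀ t : ℝ, BddAbove (f '' Icc 0 t) := fun t =>
    (isCompact_Icc.image hf).bddAbove
  have hle : ∀ t u : ℝ, 0 ≤ u → u ≤ t → f u ≤ D t := by
    intro t u h0 hut
    rw [hD]
    exact le_csSup (hbdd t) (mem_image_of_mem f ⟨h0, hut⟩)
  have hDle : ∀ t c : ℝ, 0 ≤ t → (∀ u, 0 ≤ u → u ≤ t → f u ≤ c) → D t ≤ c := by
    intro t c ht hc
    rw [hD]
    refine csSup_le ⟨f 0, mem_image_of_mem f ⟨le_refl 0, ht⟩⟩ ?_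
    rintro y ⟨u, ⟨hu0, hut⟩, rfl⟩
    exact hc u hu0 hut
  have hmono : MonotoneOn D (Ici (0:ℝ)) := by
    intro s hs t ht hst
    rw [hD s, hD t]
    exact csSup_le_csSup (hbdd t) ⟨f 0, mem_image_of_mem f ⟨le_refl 0, hs⟩⟩
      (image_mono (f := f) (Icc_subset_Icc_right hst))
  have hfnn : ∀ u : ℝ, 0 ≤ f u := fun u => le_max_right _ _
  have hDnn : ∀ t : ℝ, 0 ≤ t → 0 ≤ D t := fun t ht =>
    le_trans (hfnn 0) (hle t 0 le_rfl ht)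
  refine ⟨hmono, ?_, ?_, ?_⟩
  · -- continuity on (0,∞)
    intro t0 ht0
    apply ContinuousAt.continuousWithinAt
    rw [Metric.continuousAt_iff]
    intro ε hε
    obtain ⟨δ0, hδ0, hδ⟩ := Metric.continuousAt_iff.mp hf.continuousAt (ε/4) (by linarith)
    have ht0' : (0:ℝ) < t0 := ht0
    refine ⟨min δ0 t0, lt_min hδ0 ht0', ?_⟩
    intro t ht
    have habs := abs_lt.mp (by rwa [Real.dist_eq] at ht)
    have hmin1 : min δ0 t0 ≤ δ0 := min_le_left _ _
    have hmin2 : min δ0 t0 ≤ t0 := min_le_right _ _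
    have htpos : 0 ≤ t := by nlinarith [habs.1]
    have htδ0 : dist t t0 < δ0 := by
      rw [Real.dist_eq, abs_lt]; constructor <;> linarith [habs.1, habs.2]
    have key : ∀ a c : ℝ, 0 ≤ a → a ≤ c →
        (∀ u, a < u → u ≤ c → dist u t0 < δ0) → dist a t0 < δ0 →
        D c ≤ D a + ε/2 := by
      intro a c ha hac hmid haδ
      apply hDle c (D a + ε/2) (le_trans ha hac)
      intro u hu0 huc
      by_cases hua : u ≤ a
      · linarith [hle a u hu0 hua]
      · push_neg at hua
        have h1 := hδ (hmid u hua huc)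
        have h2 := hδ haδ
        rw [Real.dist_eq] at h1 h2
        have h1' := abs_lt.mp h1
        have h2' := abs_lt.mp h2
        have hfa : f a ≤ D a := hle a a ha le_rfl
        linarith [h1'.1, h1'.2, h2'.1, h2'.2]
    have hdist : |D t - D t0| ≤ ε/2 := by
      rcases le_total t t0 with hc | hc
      · have h1 : D t ≤ D t0 := hmono htpos (le_of_lt ht0') hc
        have h2 : D t0 ≤ D t + ε/2 := by
          refine key t t0 htpos hc ?_ htδ0
          intro u hu1 hu2
          rw [Real.dist_eq, abs_lt]
          rw [Real.dist_eq, abs_lt] at htδ0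
          constructor <;> linarith [htδ0.1, htδ0.2]
        rw [abs_le]; constructor <;> linarith
      · have h1 : D t0 ≤ D t := hmono (le_of_lt ht0') htpos hc
        have h2 : D t ≤ D t0 + ε/2 := by
          refine key t0 t (le_of_lt ht0') hc ?_ ?_
          · intro u hu1 hu2
            rw [Real.dist_eq, abs_lt]
            rw [Real.dist_eq, abs_lt] at htδ0
            constructor <;> linarith [htδ0.1, htδ0.2]
          · rw [dist_self]; exact hδ0
        rw [abs_le]; constructor <;> linarith
    rw [Real.dist_eq]
    linarith [hdist]
  · intro t ht
    have h1 : binv (Y t) - x ≤ f t := le_max_left _ _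
    have h2 : f t ≤ D t := hle t t ht le_rfl
    linarith
  · intro s hs hlt
    have hDs : 0 ≤ D s := hDnn s hs
    have hδ : ∃ δ > 0, ∀ t : ℝ, dist t s < δ → f t ≤ D s := by
      rcases eq_or_lt_of_le hDs with h0 | h0
      · have hneg : binv (Y s) - x < 0 := by linarith
        have hcg : Continuous (fun t => binv (Y t) - x) := (hbinv.comp hY).sub continuous_const
        obtain ⟨δ, hδpos, hδ⟩ := Metric.continuousAt_iff.mp hcg.continuousAt
          (-(binv (Y s) - x)) (by linarith)
        refine ⟨δ, hδpos, ?_⟩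
        intro t ht
        have h := hδ ht
        rw [Real.dist_eq] at h
        have h' := (abs_lt.mp h).2
        have hgt : binv (Y t) - x < 0 := by linarith
        have : f t ≤ 0 := max_le (le_of_lt hgt) le_rfl
        linarith
      · have hfs : f s < D s := max_lt (by linarith) h0
        obtain ⟨δ, hδpos, hδ⟩ := Metric.continuousAt_iff.mp hf.continuousAt
          (D s - f s) (by linarith)
        refine ⟨δ, hδpos, ?_⟩
        intro t ht
        have h := hδ ht
        rw [Real.dist_eq] at h
        have h' := (abs_lt.mp h).2
        linarith
    obtain ⟨δ, hδpos, hδ⟩ := hδ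
    refine ⟨δ/2, by linarith, ?_⟩
    rintro t ⟨hts, hts'⟩
    have ht0 : 0 ≤ t := le_trans hs hts
    refine le_antisymm ?_ (hmono hs ht0 hts)
    apply hDle t (D s) ht0
    intro u hu0 hut
    by_cases hus : u ≤ s
    · exact hle s u hu0 hus
    · push_neg at hus
      apply hδ
      rw [Real.dist_eq, abs_lt]
      constructor <;> linarith
end

section
/- Let b : (x₀, x¹) → ℝ be differentiable with b(x) > x, satisfying b'(x) = F(x, b(x)) where F(x,y) = G(y/x) for a differentiable function G : (1,∞) → ℝ. If at every z in the range of x ↦ b(x)/x one has G(z) ≤ z, and G is increasing (G' ≥ 0), then b is concave: b''(x) ≤ 0 wherever it exists. -/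
open Set

/-- Concavity of solutions of the scale-invariant ODE `b' = G(b/x)`: if `G` is
increasing and `G(z) ≤ z` along the range of `b(x)/x`, then `b'' ≤ 0` wherever it
exists. -/
theorem concavity_of_solution (x₀ x₁ : ℝ) (hx₀ : 0 ≤ x₀) (hx : x₀ < x₁)
    (b G G' : ℝ → ℝ)
    (hb_gt : ∀ x ∈ Ioo x₀ x₁, x < b x)
    (hG : ∀ z : ℝ, 1 < z → HasDerivAt G (G' z) z)
    (hG' : ∀ z : ℝ, 1 < z → 0 ≤ G' z)
    (hODE : ∀ x ∈ Ioo x₀ x₁, HasDerivAt b (G (b x / x)) x)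
    (hle : ∀ x ∈ Ioo x₀ x₁, G (b x / x) ≤ b x / x) :
    ∀ x ∈ Ioo x₀ x₁, ∀ L : ℝ, HasDerivAt (deriv b) L x → L ≤ 0 := by
  intro x hxm L hL
  have hxpos : 0 < x := lt_of_le_of_lt hx₀ hxm.1
  have hxne : x ≠ 0 := ne_of_gt hxpos
  have hz1 : 1 < b x / x := (one_lt_div hxpos).2 (hb_gt x hxm)
  set z := b x / x with hz
  -- derivative of x ↦ b x / x
  have hquot : HasDerivAt (fun y => b y / y)
      ((G z * x - b x * 1) / x ^ 2) x :=
    (hODE x hxm).div (hasDerivAt_id x) hxne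
  have hcomp : HasDerivAt (fun y => G (b y / y))
      (G' z * ((G z * x - b x * 1) / x ^ 2)) x :=
    (hG z hz1).comp x hquot
  -- deriv b agrees with y ↦ G (b y / y) near x
  have heq : deriv b =ᶠ[nhds x] fun y => G (b y / y) := by
    filter_upwards [isOpen_Ioo.mem_nhds hxm] with y hy
    exact (hODE y hy).deriv
  have hL' : HasDerivAt (deriv b) (G' z * ((G z * x - b x * 1) / x ^ 2)) x :=
    hcomp.congr_of_eventuallyEq heq
  have hLeq : L = G' z * ((G z * x - b x * 1) / x ^ 2) := hL.unique hL'
  rw [hLeq]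
  apply mul_nonpos_of_nonneg_of_nonpos (hG' z hz1)
  apply div_nonpos_of_nonpos_of_nonneg _ (sq_nonneg x)
  have : G z * x ≤ z * x := mul_le_mul_of_nonneg_right (hle x hxm) hxpos.le
  have hzx : z * x = b x := div_mul_cancel₀ _ hxne
  linarith
end

section
/- Let σ > 0 and μ be continuous on an interval, r > 0, and let u : [x, b] → ℝ be C² with ℒu := (σ²/2)u'' + μu' − ru = 0 on (x,b), u(b) < 0 and u'(b) > 0. Then u' > 0 on (x,b) and u < u(b) on (x,b). -/
open Set Filter Topology

/-- Comparison step (Proposition 4.1): a solution of `(σ²/2)u'' + μu' − ru = 0` on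
`(x,b)` with `u(b) < 0` and `u'(b) > 0` satisfies `u' > 0` on `(x,b)` and
`u < u(b)` on `(x,b)`. -/
theorem deriv_pos_of_negative_solution (μ σ : ℝ → ℝ) (r : ℝ) (hr : 0 < r)
    (x b : ℝ) (hb : x < b)
    (hμc : ContinuousOn μ (Icc x b)) (hσc : ContinuousOn σ (Icc x b))
    (hσ : ∀ y ∈ Icc x b, 0 < σ y)
    (u u' u'' : ℝ → ℝ)
    (hu : ∀ y ∈ Icc x b, HasDerivAt u (u' y) y)
    (hu' : ∀ y ∈ Icc x b, HasDerivAt u' (u'' y) y)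
    (hu''c : ContinuousOn u'' (Icc x b))
    (hODE : ∀ y ∈ Ioo x b, σ y ^ 2 / 2 * u'' y + μ y * u' y - r * u y = 0)
    (hub : u b < 0) (hub' : 0 < u' b) :
    ∀ y ∈ Ioo x b, 0 < u' y ∧ u y < u b := by
  have huc : ContinuousOn u (Icc x b) := fun z hz =>
    (hu z hz).continuousAt.continuousWithinAt
  -- if u' > 0 on Ioo c b with c ∈ Icc x b, c < b, then u c < u b
  have mono : ∀ c ∈ Icc x b, c < b → (∀ z ∈ Ioo c b, 0 < u' z) → u c < u b := by
    intro c hc hcb hpos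
    have hsub : Icc c b ⊆ Icc x b := Icc_subset_Icc hc.1 le_rfl
    have hmono : StrictMonoOn u (Icc c b) := by
      apply strictMonoOn_of_deriv_pos (convex_Icc c b) (huc.mono hsub)
      intro z hz
      rw [interior_Icc] at hz
      rw [(hu z (hsub (Ioo_subset_Icc_self hz))).deriv]
      exact hpos z hz
    exact hmono (left_mem_Icc.mpr hcb.le) (right_mem_Icc.mpr hcb.le) hcb
  have key : ∀ y ∈ Ioo x b, 0 < u' y := by
    by_contra h
    push_neg at h
    obtain ⟨y, hy, hy'⟩ := h
    set S : Set ℝ := {z | z ∈ Icc y b ∧ u' z ≤ 0} with hS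
    have hSne : S.Nonempty := ⟨y, ⟨le_refl y, hy.2.le⟩, hy'⟩
    have hSbdd : BddAbove S := ⟨b, fun z hz => hz.1.2⟩
    set y₀ : ℝ := sSup S with hy₀def
    have hyy₀ : y ≤ y₀ := le_csSup hSbdd ⟨⟨le_refl y, hy.2.le⟩, hy'⟩
    have hy₀b : y₀ ≤ b := csSup_le hSne fun z hz => hz.1.2
    have hy₀Icc : y₀ ∈ Icc x b := ⟨hy.1.le.trans hyy₀, hy₀b⟩
    -- u' y₀ ≤ 0 via a monotone sequence in S tending to sSup S
    have hu'y₀le : u' y₀ ≤ 0 := by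
      obtain ⟨w, -, hwlim, hwS⟩ := exists_seq_tendsto_sSup hSne hSbdd
      have hcont : Tendsto (fun n => u' (w n)) atTop (𝓝 (u' y₀)) :=
        ((hu' y₀ hy₀Icc).continuousAt.tendsto.comp hwlim)
      exact le_of_tendsto hcont (Eventually.of_forall fun n => (hwS n).2)
    have hy₀lt : y₀ < b := by
      rcases lt_or_eq_of_le hy₀b with h | h
      · exact h
      · rw [h] at hu'y₀le; exact absurd hub' (not_lt.mpr hu'y₀le)
    have hy₀Ioo : y₀ ∈ Ioo x b := ⟨hy.1.trans_le hyy₀, hy₀lt⟩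
    -- u' > 0 on (y₀, b]
    have hpos : ∀ z ∈ Ioc y₀ b, 0 < u' z := by
      intro z hz
      by_contra hzneg
      push_neg at hzneg
      have : z ∈ S := ⟨⟨hyy₀.trans hz.1.le, hz.2⟩, hzneg⟩
      exact absurd (le_csSup hSbdd this) (not_le.mpr hz.1)
    -- u' y₀ = 0
    have hu'y₀ : u' y₀ = 0 := by
      refine le_antisymm hu'y₀le ?_
      have hcont : Tendsto u' (𝓝[>] y₀) (𝓝 (u' y₀)) :=
        ((hu' y₀ hy₀Icc).continuousAt.tendsto.mono_left nhdsWithin_le_nhds)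
      refine ge_of_tendsto hcont ?_
      filter_upwards [Ioo_mem_nhdsGT_of_mem (Set.left_mem_Ico.mpr hy₀lt)] with z hz
      exact (hpos z ⟨hz.1, hz.2.le⟩).le
    -- u y₀ < u b
    have huy₀ : u y₀ < u b := mono y₀ hy₀Icc hy₀lt fun z hz => hpos z ⟨hz.1, hz.2.le⟩
    -- u'' y₀ ≥ 0 from the slope of u' on the right
    have hslope : 0 ≤ u'' y₀ := by
      have htend : Tendsto (slope u' y₀) (𝓝[>] y₀) (𝓝 (u'' y₀)) :=
        ((hasDerivAt_iff_tendsto_slope.mp (hu' y₀ hy₀Icc)).mono_left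
          (nhdsWithin_mono y₀ fun z hz => ne_of_gt hz))
      refine ge_of_tendsto htend ?_
      filter_upwards [Ioo_mem_nhdsGT_of_mem (Set.left_mem_Ico.mpr hy₀lt)] with z hz
      rw [slope_def_field, hu'y₀]
      have : 0 < u' z := hpos z ⟨hz.1, hz.2.le⟩
      have hz' : 0 < z - y₀ := sub_pos.mpr hz.1
      exact div_nonneg (by linarith) hz'.le
    -- u'' y₀ < 0 from the ODE
    have hODE0 := hODE y₀ hy₀Ioo
    rw [hu'y₀, mul_zero, add_zero, sub_eq_zero] at hODE0
    have hσ0 : 0 < σ y₀ := hσ y₀ hy₀Icc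
    have huy₀neg : u y₀ < 0 := huy₀.trans hub
    have : σ y₀ ^ 2 / 2 * u'' y₀ < 0 := by
      rw [hODE0]; exact mul_neg_of_pos_of_neg hr huy₀neg
    nlinarith [sq_nonneg (σ y₀)]
  intro y hy
  exact ⟨key y hy, mono y (Ioo_subset_Icc_self hy) hy.2
    fun z hz => key z ⟨hy.1.trans hz.1, hz.2⟩⟩
end
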